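/- arXiv:2304.03114 — 2 statements merged into one kernel-verified Lean document; each statement's English description precedes it below -/
import Mathlib

section
/- Let ν ∈ (0,1) and 0 < ε < 1. There exists a constant C > 0 such that for all real a, b with |a| ≤ |b|, the integral over ℝ of dξ/(|ξ|^ν · ⟨ξ-a⟩ · ⟨ξ-b⟩) is at most C/(⟨a⟩^ν · ⟨b-a⟩^{1-ε}). -/
/-!
Split the line at `|ξ| = ⟨a⟩/2`. Near the origin `⟨ξ - a⟩ ≥ ⟨a⟩/2` and, as `⟨a⟩ ≤ ⟨b⟩`,
`⟨ξ - b⟩ ≥ ⟨b⟩/2 ≥ ⟨b - a⟩/4`; then `∫_{|ξ| ≤ R} |ξ|^{-ν} = 2R^{1-ν}/(1-ν)` with `R = ⟨a⟩/2`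
turns `⟨a⟩^{-1}` into `⟨a⟩^{-ν}`. Away from the origin `|ξ|^{-ν} ≤ 2⟨a⟩^{-ν}`, and since
`⟨b - a⟩ ≤ ⟨ξ - a⟩ + ⟨ξ - b⟩`, the elementary bound `(uv)⁻¹ ≤ 2 (u^{-1-ε} + v^{-1-ε}) / w^{1-ε}`
for `w ≤ u + v` gives up `ε` of decay in exchange for the integrable weights `⟨ξ - a⟩^{-1-ε}` and
`⟨ξ - b⟩^{-1-ε}`.
-/

/-- The Japanese bracket `⟨x⟩ = (1 + x²)^{1/2}`. -/
noncomputable def jb (x : ℝ) : ℝ := Real.sqrt (1 + x ^ 2)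

open MeasureTheory Set

lemma one_le_jb (x : ℝ) : 1 ≤ jb x :=
  Real.one_le_sqrt.mpr (by nlinarith)

lemma jb_pos (x : ℝ) : 0 < jb x :=
  one_pos.trans_le (one_le_jb x)

lemma abs_le_jb (x : ℝ) : |x| ≤ jb x :=
  Real.abs_le_sqrt (by linarith)

lemma jb_sub_comm (x y : ℝ) : jb (x - y) = jb (y - x) := by
  rw [jb, jb, ← neg_sub, neg_sq]

lemma jb_le_jb_add_abs_sub (x y : ℝ) : jb x ≤ jb y + |x - y| := by
  refine Real.sqrt_le_iff.mpr ⟨add_nonneg (jb_pos y).le (abs_nonneg _), ?_⟩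
  have hy : y * (x - y) ≤ jb y * |x - y| :=
    (le_abs_self _).trans (by rw [abs_mul]; gcongr; exact abs_le_jb y)
  have hjb : jb y ^ 2 = 1 + y ^ 2 := Real.sq_sqrt (by positivity)
  nlinarith [sq_abs (x - y)]

lemma jb_le_jb_of_abs_le {x y : ℝ} (h : |x| ≤ |y|) : jb x ≤ jb y :=
  Real.sqrt_le_sqrt (by nlinarith [sq_abs x, sq_abs y, abs_nonneg x])

lemma jb_sub_le_add (a b ξ : ℝ) : jb (b - a) ≤ jb (ξ - a) + jb (ξ - b) := by
  have h := jb_le_jb_add_abs_sub (b - a) (ξ - a)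
  rw [show b - a - (ξ - a) = b - ξ by ring] at h
  linarith [abs_le_jb (b - ξ), jb_sub_comm b ξ]

lemma integrable_jb_rpow_neg {s : ℝ} (hs : 1 < s) : Integrable fun x => jb x ^ (-s) := by
  have h := integrable_rpow_neg_one_add_norm_sq (E := ℝ) (μ := volume) (r := s) (by simpa using hs)
  refine h.congr (ae_of_all _ fun x => ?_)
  simp only [jb]
  rw [Real.sqrt_eq_rpow, ← Real.rpow_mul (by positivity), Real.norm_eq_abs, sq_abs]
  ring_nf

lemma rpow_div_two_le_div_two_rpow {x ν : ℝ} (hx : 0 ≤ x) (hν : ν ≤ 1) :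
    x ^ ν / 2 ≤ (x / 2) ^ ν := by
  rw [Real.div_rpow hx zero_le_two]
  gcongr
  exact Real.rpow_le_self_of_one_le one_le_two hν

lemma inv_mul_le_rpow_of_le_two_mul {u v w ε : ℝ} (hε0 : 0 ≤ ε) (hε1 : ε ≤ 1) (hu : 0 < u)
    (huv : u ≤ v) (hw : 0 < w) (hwv : w ≤ 2 * v) :
    (u * v)⁻¹ ≤ 2 * u ^ (-(1 + ε)) / w ^ (1 - ε) := by
  have hv : 0 < v := hu.trans_le huv
  have hw' : w ^ (1 - ε) ≤ 2 * v ^ (1 - ε) :=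
    calc w ^ (1 - ε) ≤ (2 * v) ^ (1 - ε) := by gcongr
      _ = 2 ^ (1 - ε) * v ^ (1 - ε) := Real.mul_rpow zero_le_two hv.le
      _ ≤ 2 * v ^ (1 - ε) := by
        gcongr; exact Real.rpow_le_self_of_one_le one_le_two (by linarith)
  have hv' : v ^ (1 - ε) * u ^ ε ≤ v := by
    calc v ^ (1 - ε) * u ^ ε ≤ v ^ (1 - ε) * v ^ ε := by gcongr
      _ = v := by rw [← Real.rpow_add hv]; simp
  rw [Real.rpow_neg hu.le, Real.rpow_add hu, Real.rpow_one, le_div_iff₀ (by positivity)]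
  have huε : 0 < u ^ ε := by positivity
  calc (u * v)⁻¹ * w ^ (1 - ε) ≤ (u * v)⁻¹ * (2 * v ^ (1 - ε)) := by gcongr
    _ = 2 * (u * u ^ ε)⁻¹ * (v ^ (1 - ε) * u ^ ε / v) := by field_simp
    _ ≤ 2 * (u * u ^ ε)⁻¹ :=
      mul_le_of_le_one_right (by positivity) ((div_le_one hv).mpr hv')

lemma inv_mul_le_rpow_add_rpow_of_le_add {u v w ε : ℝ} (hε0 : 0 ≤ ε) (hε1 : ε ≤ 1)
    (hu : 0 < u) (hv : 0 < v) (hw : 0 < w) (hwuv : w ≤ u + v) :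
    (u * v)⁻¹ ≤ 2 * (u ^ (-(1 + ε)) + v ^ (-(1 + ε))) / w ^ (1 - ε) := by
  have hu' : 0 ≤ u ^ (-(1 + ε)) := by positivity
  have hv' : 0 ≤ v ^ (-(1 + ε)) := by positivity
  rcases le_total u v with huv | hvu
  · refine (inv_mul_le_rpow_of_le_two_mul hε0 hε1 hu huv hw (by linarith)).trans ?_
    gcongr; linarith
  · rw [mul_comm]
    refine (inv_mul_le_rpow_of_le_two_mul hε0 hε1 hv hvu hw (by linarith)).trans ?_
    gcongr; linarith

lemma locallyIntegrable_abs_rpow_neg {ν : ℝ} (hν : ν < 1) :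
    LocallyIntegrable fun x : ℝ => |x| ^ (-ν) :=
  locallyIntegrable_of_norm_le_rpow (C := 1) (by simp) (by simpa using hν)
    (ae_of_all _ fun x => by simp [abs_of_nonneg (Real.rpow_nonneg (abs_nonneg x) _)])
    (continuous_abs.measurable.pow_const _).aestronglyMeasurable

lemma integrable_indicator_abs_rpow_neg {ν : ℝ} (hν : ν < 1) (R : ℝ) :
    Integrable ((Icc (-R) R).indicator fun x => |x| ^ (-ν)) :=
  (integrable_indicator_iff measurableSet_Icc).mpr
    ((locallyIntegrable_abs_rpow_neg hν).integrableOn_isCompact isCompact_Icc)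

lemma integral_indicator_abs_rpow_neg {ν R : ℝ} (hν : ν < 1) (hR : 0 ≤ R) :
    ∫ x, (Icc (-R) R).indicator (fun x => |x| ^ (-ν)) x = 2 * (R ^ (1 - ν) / (1 - ν)) := by
  have h : (Icc (-R) R).indicator (fun x => |x| ^ (-ν))
      = fun x => (Iic R).indicator (fun t => t ^ (-ν)) |x| := by
    ext x; simp [indicator_apply, abs_le]
  rw [h, integral_comp_abs, setIntegral_indicator measurableSet_Iic, Ioi_inter_Iic,
    ← intervalIntegral.integral_of_le hR, integral_rpow (Or.inl (by linarith)),
    Real.zero_rpow (by linarith)]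
  ring_nf

lemma inv_jb_mul_jb_le_of_abs_le {a b ξ : ℝ} (hab : |a| ≤ |b|) (hξ : |ξ| ≤ jb a / 2) :
    (jb (ξ - a) * jb (ξ - b))⁻¹ ≤ 8 / (jb a * jb (b - a)) := by
  have ha : jb a ≤ 2 * jb (ξ - a) := by
    have h := jb_le_jb_add_abs_sub a (a - ξ)
    rw [sub_sub_cancel, jb_sub_comm] at h
    linarith
  have hb : jb b ≤ 2 * jb (ξ - b) := by
    have h := jb_le_jb_add_abs_sub b (b - ξ)
    rw [sub_sub_cancel, jb_sub_comm] at h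
    linarith [jb_le_jb_of_abs_le hab]
  have hba : jb (b - a) ≤ 2 * jb b := by
    have h := jb_le_jb_add_abs_sub (b - a) b
    rw [sub_sub_cancel_left, abs_neg] at h
    linarith [abs_le_jb b]
  calc (jb (ξ - a) * jb (ξ - b))⁻¹ ≤ (jb a / 2 * (jb (b - a) / 4))⁻¹ := by
        have := jb_pos a; have := jb_pos (b - a)
        gcongr <;> linarith
    _ = 8 / (jb a * jb (b - a)) := by field_simp; norm_num

lemma one_div_rpow_mul_jb_mul_jb_le_of_le_abs {ν ε a b ξ : ℝ} (hν0 : 0 ≤ ν) (hν1 : ν ≤ 1)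
    (hε0 : 0 ≤ ε) (hε1 : ε ≤ 1) (hξ : jb a / 2 ≤ |ξ|) :
    1 / (|ξ| ^ ν * jb (ξ - a) * jb (ξ - b)) ≤
      4 / (jb a ^ ν * jb (b - a) ^ (1 - ε)) *
        (jb (ξ - a) ^ (-(1 + ε)) + jb (ξ - b) ^ (-(1 + ε))) := by
  have ha := jb_pos a
  have hξν : jb a ^ ν / 2 ≤ |ξ| ^ ν :=
    (rpow_div_two_le_div_two_rpow ha.le hν1).trans (by gcongr)
  have hpair := inv_mul_le_rpow_add_rpow_of_le_add hε0 hε1 (jb_pos (ξ - a)) (jb_pos (ξ - b))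
    (jb_pos (b - a)) (jb_sub_le_add a b ξ)
  have : 0 < jb a ^ ν := by positivity
  have := jb_pos (ξ - a); have := jb_pos (ξ - b)
  calc 1 / (|ξ| ^ ν * jb (ξ - a) * jb (ξ - b)) = (|ξ| ^ ν)⁻¹ * (jb (ξ - a) * jb (ξ - b))⁻¹ := by
        rw [mul_assoc, one_div, mul_inv]
    _ ≤ (jb a ^ ν / 2)⁻¹ *
        (2 * (jb (ξ - a) ^ (-(1 + ε)) + jb (ξ - b) ^ (-(1 + ε))) / jb (b - a) ^ (1 - ε)) := by
        gcongr
    _ = _ := by field_simp; ring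

lemma one_div_rpow_mul_jb_mul_jb_le_majorant {ν ε a b : ℝ} (hν0 : 0 ≤ ν) (hν1 : ν ≤ 1)
    (hε0 : 0 ≤ ε) (hε1 : ε ≤ 1) (hab : |a| ≤ |b|) (ξ : ℝ) :
    1 / (|ξ| ^ ν * jb (ξ - a) * jb (ξ - b)) ≤
      8 / (jb a * jb (b - a) ^ (1 - ε)) *
          (Icc (-(jb a / 2)) (jb a / 2)).indicator (fun x => |x| ^ (-ν)) ξ
        + 4 / (jb a ^ ν * jb (b - a) ^ (1 - ε)) *
          (jb (ξ - a) ^ (-(1 + ε)) + jb (ξ - b) ^ (-(1 + ε))) := by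
  have hfar_nonneg : 0 ≤ 4 / (jb a ^ ν * jb (b - a) ^ (1 - ε)) *
      (jb (ξ - a) ^ (-(1 + ε)) + jb (ξ - b) ^ (-(1 + ε))) := by
    have := jb_pos a; have := jb_pos (b - a); have := jb_pos (ξ - a); have := jb_pos (ξ - b)
    positivity
  by_cases hξ : ξ ∈ Icc (-(jb a / 2)) (jb a / 2)
  · rw [indicator_of_mem hξ]
    refine le_add_of_le_of_nonneg ?_ hfar_nonneg
    have hw : jb (b - a) ^ (1 - ε) ≤ jb (b - a) :=
      Real.rpow_le_self_of_one_le (one_le_jb _) (by linarith)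
    have := jb_pos a; have := jb_pos (b - a)
    calc 1 / (|ξ| ^ ν * jb (ξ - a) * jb (ξ - b)) = |ξ| ^ (-ν) * (jb (ξ - a) * jb (ξ - b))⁻¹ := by
          rw [Real.rpow_neg (abs_nonneg ξ), mul_assoc, one_div, mul_inv]
      _ ≤ |ξ| ^ (-ν) * (8 / (jb a * jb (b - a) ^ (1 - ε))) := by
          gcongr
          exact (inv_jb_mul_jb_le_of_abs_le hab (abs_le.mpr hξ)).trans (by gcongr)
      _ = _ := mul_comm _ _
  · rw [indicator_of_notMem hξ, mul_zero, zero_add]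
    rw [mem_Icc, ← abs_le, not_le] at hξ
    exact one_div_rpow_mul_jb_mul_jb_le_of_le_abs hν0 hν1 hε0 hε1 hξ.le

lemma integral_singular_bracket_le_of_abs_le {ν ε a b : ℝ} (hν0 : 0 ≤ ν) (hν1 : ν < 1)
    (hε0 : 0 < ε) (hε1 : ε ≤ 1) (hab : |a| ≤ |b|) :
    ∫ ξ, 1 / (|ξ| ^ ν * jb (ξ - a) * jb (ξ - b)) ≤
      (16 / (1 - ν) + 8 * ∫ x, jb x ^ (-(1 + ε))) / (jb a ^ ν * jb (b - a) ^ (1 - ε)) := by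
  have hs : 1 < 1 + ε := by linarith
  have hnear := (integrable_indicator_abs_rpow_neg hν1 (jb a / 2)).const_mul
    (8 / (jb a * jb (b - a) ^ (1 - ε)))
  have hia := (integrable_jb_rpow_neg hs).comp_sub_right a
  have hib := (integrable_jb_rpow_neg hs).comp_sub_right b
  have hfar := (hia.fun_add hib).const_mul (4 / (jb a ^ ν * jb (b - a) ^ (1 - ε)))
  have ha := jb_pos a
  have hw := jb_pos (b - a)
  have hf : ∀ ξ, 0 ≤ 1 / (|ξ| ^ ν * jb (ξ - a) * jb (ξ - b)) := fun ξ =>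
    div_nonneg zero_le_one (mul_nonneg (mul_nonneg (by positivity) (jb_pos _).le) (jb_pos _).le)
  have hpow : (jb a / 2) ^ (1 - ν) ≤ jb a / jb a ^ ν := by
    rw [← Real.rpow_one_sub' ha.le (by linarith)]
    gcongr; linarith
  calc ∫ ξ, 1 / (|ξ| ^ ν * jb (ξ - a) * jb (ξ - b))
      ≤ ∫ ξ, (8 / (jb a * jb (b - a) ^ (1 - ε)) *
            (Icc (-(jb a / 2)) (jb a / 2)).indicator (fun x => |x| ^ (-ν)) ξ
          + 4 / (jb a ^ ν * jb (b - a) ^ (1 - ε)) *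
            (jb (ξ - a) ^ (-(1 + ε)) + jb (ξ - b) ^ (-(1 + ε)))) :=
        integral_mono_of_nonneg (ae_of_all _ hf) (hnear.add hfar)
          (ae_of_all _ (one_div_rpow_mul_jb_mul_jb_le_majorant hν0 hν1.le hε0.le hε1 hab))
    _ = 8 / (jb a * jb (b - a) ^ (1 - ε)) * (2 * ((jb a / 2) ^ (1 - ν) / (1 - ν)))
          + 4 / (jb a ^ ν * jb (b - a) ^ (1 - ε)) * (2 * ∫ x, jb x ^ (-(1 + ε))) := by
        rw [integral_add hnear hfar, integral_const_mul, integral_const_mul,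
          integral_indicator_abs_rpow_neg hν1 (by positivity),
          integral_add hia hib,
          integral_sub_right_eq_self (fun x => jb x ^ (-(1 + ε))),
          integral_sub_right_eq_self (fun x => jb x ^ (-(1 + ε)))]
        ring
    _ ≤ 8 / (jb a * jb (b - a) ^ (1 - ε)) * (2 * ((jb a / jb a ^ ν) / (1 - ν)))
          + 4 / (jb a ^ ν * jb (b - a) ^ (1 - ε)) * (2 * ∫ x, jb x ^ (-(1 + ε))) := by
        have : 0 < 1 - ν := by linarith
        gcongr
    _ = _ := by field_simp; ring

/-- Lemma on integrals with a singularity at the origin: for `ν ∈ (0,1)` and `0 < ε < 1`,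
for all `a, b ∈ ℝ` with `|a| ≤ |b|`,
`∫_ℝ |ξ|^{-ν} ⟨ξ-a⟩^{-1} ⟨ξ-b⟩^{-1} dξ ≲ ⟨a⟩^{-ν} ⟨b-a⟩^{-(1-ε)}`. -/
theorem integral_singular_bracket_le (ν ε : ℝ) (hν0 : 0 < ν) (hν1 : ν < 1)
    (hε0 : 0 < ε) (hε1 : ε < 1) :
    ∃ C > 0, ∀ a b : ℝ, |a| ≤ |b| →
      (∫ ξ : ℝ, 1 / (|ξ| ^ ν * jb (ξ - a) * jb (ξ - b)))
        ≤ C / (jb a ^ ν * jb (b - a) ^ (1 - ε)) := by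
  have hK : 0 ≤ ∫ x, jb x ^ (-(1 + ε)) :=
    integral_nonneg fun x => Real.rpow_nonneg (jb_pos x).le _
  have : 0 < 1 - ν := by linarith
  exact ⟨_, by positivity, fun a b hab =>
    integral_singular_bracket_le_of_abs_le hν0.le hν1 hε0 hε1.le hab⟩
end

section
/- There exists a constant c > 0 such that for every integer k ≥ 1, ∫_{k²/2 ≤ |ξ| ≤ 3k²/2} |ξ|^{1-2H₀} (∫₀^{min(T,1)} |∫₀^t e^{is(k²-ξ)} ds|² dt) dξ ≥ c · k^{2-4H₀}, for any fixed T > 0 and H₀ ∈ (1/2,1), where the constant c depends on T, H₀ but not on k. -/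
/-!
Restrict the outer integral to `ξ ∈ [k² - 1/2, k²]`, an interval of length `1/2`. There the phase
`s (k² - ξ)` lies in `[0, 1/2]` for `s ≤ t ≤ 1`, so the real part of `∫₀^t e^{is(k²-ξ)} ds` is at
least `t cos (1/2)`; this gives `∫₀^{min(T,1)} |…|² dt ≥ cos (1/2)² min(T,1)³ / 3`, while
`|ξ|^{1-2H₀} ≥ (k²)^{1-2H₀} = k^{2-4H₀}` because the exponent is negative and `ξ ≤ k²`.
-/

open MeasureTheory Complex

lemma re_intervalIntegral_exp_I_mul (θ t : ℝ) :
    (∫ s in (0 : ℝ)..t, exp (I * s * θ)).re = ∫ s in (0 : ℝ)..t, Real.cos (s * θ) := by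
  have hint : IntervalIntegrable (fun s : ℝ => exp (I * s * θ)) volume 0 t :=
    (by fun_prop : Continuous fun s : ℝ => exp (I * s * θ)).intervalIntegrable 0 t
  rw [← RCLike.re_to_complex, ← intervalIntegral.intervalIntegral_re hint]
  congr 1 with s
  rw [RCLike.re_to_complex, ← exp_ofReal_mul_I_re]
  push_cast
  ring_nf

lemma mul_cos_le_norm_intervalIntegral_exp_I_mul {θ t a : ℝ} (ht : 0 ≤ t) (ha : a ≤ Real.pi)
    (htθ : t * |θ| ≤ a) : t * Real.cos a ≤ ‖∫ s in (0 : ℝ)..t, exp (I * s * θ)‖ := by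
  have hcos_le : ∀ s ∈ Set.Icc 0 t, Real.cos a ≤ Real.cos (s * θ) := by
    rintro s ⟨hs0, hst⟩
    rw [← Real.cos_abs (s * θ), abs_mul, abs_of_nonneg hs0]
    refine Real.cos_le_cos_of_nonneg_of_le_pi (by positivity) ha ?_
    exact (mul_le_mul_of_nonneg_right hst (abs_nonneg θ)).trans htθ
  calc t * Real.cos a = ∫ _ in (0 : ℝ)..t, Real.cos a := by simp
    _ ≤ ∫ s in (0 : ℝ)..t, Real.cos (s * θ) :=
      intervalIntegral.integral_mono_on ht intervalIntegrable_const
        ((by fun_prop : Continuous fun s : ℝ => Real.cos (s * θ)).intervalIntegrable 0 t) hcos_le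
    _ = (∫ s in (0 : ℝ)..t, exp (I * s * θ)).re := (re_intervalIntegral_exp_I_mul θ t).symm
    _ ≤ _ := re_le_norm _

lemma continuous_intervalIntegral_exp_I_mul :
    Continuous fun p : ℝ × ℝ => ∫ s in (0 : ℝ)..p.2, exp (I * s * p.1) :=
  intervalIntegral.continuous_parametric_intervalIntegral_of_continuous
    (f := fun (p : ℝ × ℝ) (s : ℝ) => exp (I * s * p.1)) (by fun_prop) continuous_snd

lemma continuous_norm_sq_intervalIntegral_exp_I_mul :
    Continuous fun p : ℝ × ℝ => ‖∫ s in (0 : ℝ)..p.2, exp (I * s * p.1)‖ ^ 2 :=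
  continuous_intervalIntegral_exp_I_mul.norm.pow 2

lemma continuous_intervalIntegral_norm_sq_intervalIntegral_exp_I_mul (T : ℝ) :
    Continuous fun θ : ℝ => ∫ t in (0 : ℝ)..T, ‖∫ s in (0 : ℝ)..t, exp (I * s * θ)‖ ^ 2 :=
  intervalIntegral.continuous_parametric_intervalIntegral_of_continuous'
    continuous_norm_sq_intervalIntegral_exp_I_mul 0 T

lemma cos_sq_mul_le_intervalIntegral_norm_sq_intervalIntegral_exp_I_mul {θ T a : ℝ} (hT : 0 ≤ T)
    (ha : a ≤ Real.pi / 2) (hTθ : T * |θ| ≤ a) :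
    Real.cos a ^ 2 * (T ^ 3 / 3) ≤
      ∫ t in (0 : ℝ)..T, ‖∫ s in (0 : ℝ)..t, exp (I * s * θ)‖ ^ 2 := by
  have hpoint : ∀ t ∈ Set.Icc 0 T,
      Real.cos a ^ 2 * t ^ 2 ≤ ‖∫ s in (0 : ℝ)..t, exp (I * s * θ)‖ ^ 2 := by
    rintro t ⟨ht0, htT⟩
    have hta : t * |θ| ≤ a := (mul_le_mul_of_nonneg_right htT (abs_nonneg θ)).trans hTθ
    have hcos : 0 ≤ Real.cos a := Real.cos_nonneg_of_neg_pi_div_two_le_of_le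
      (by linarith [Real.pi_pos, mul_nonneg ht0 (abs_nonneg θ)]) ha
    rw [← mul_pow, mul_comm]
    exact pow_le_pow_left₀ (by positivity)
      (mul_cos_le_norm_intervalIntegral_exp_I_mul ht0 (by linarith [Real.pi_pos]) hta) 2
  calc Real.cos a ^ 2 * (T ^ 3 / 3) = ∫ t in (0 : ℝ)..T, Real.cos a ^ 2 * t ^ 2 := by
        rw [intervalIntegral.integral_const_mul, integral_pow]
        norm_num
    _ ≤ _ := intervalIntegral.integral_mono_on hT
        ((by fun_prop : Continuous fun t : ℝ => Real.cos a ^ 2 * t ^ 2).intervalIntegrable 0 T)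
        ((continuous_norm_sq_intervalIntegral_exp_I_mul.comp
          (Continuous.prodMk_right θ)).intervalIntegrable 0 T) hpoint

lemma integrableOn_abs_rpow_mul_of_continuous {g : ℝ → ℝ} (hg : Continuous g) (p : ℝ)
    {a b : ℝ} (ha : 0 < a) : IntegrableOn (fun x => |x| ^ p * g x) {x | a ≤ |x| ∧ |x| ≤ b} := by
  have hcompact : IsCompact {x : ℝ | a ≤ |x| ∧ |x| ≤ b} := by
    refine Metric.isCompact_of_isClosed_isBounded
      ((isClosed_le continuous_const continuous_abs).inter
        (isClosed_le continuous_abs continuous_const)) ?_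
    exact (Metric.isBounded_closedBall (x := (0 : ℝ)) (r := b)).subset fun x hx => by
      simpa [Real.norm_eq_abs] using hx.2
  refine ContinuousOn.integrableOn_compact hcompact (ContinuousOn.mul ?_ hg.continuousOn)
  exact continuous_abs.continuousOn.rpow_const fun x hx => Or.inl (by linarith [hx.1])

lemma mul_measureReal_le_setIntegral {X : Type*} [MeasurableSpace X] {μ : Measure X}
    {f : X → ℝ} {s t : Set X} {c : ℝ} (hs : MeasurableSet s) (hμs : μ s ≠ ⊤) (hst : s ⊆ t)
    (hf : IntegrableOn f t μ) (hf0 : 0 ≤ᵐ[μ.restrict t] f) (hc : ∀ x ∈ s, c ≤ f x) :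
    c * μ.real s ≤ ∫ x in t, f x ∂μ :=
  (setIntegral_ge_of_const_le_real hs hμs hc (hf.mono_set hst)).trans
    (setIntegral_mono_set hf hf0 hst.eventuallyLE)

/-- Lower bound for the key divergence integral: for fixed `T > 0` and `H₀ ∈ (1/2,1)`,
there is `c > 0` such that for every integer `k ≥ 1`,
`∫_{k²/2 ≤ |ξ| ≤ 3k²/2} |ξ|^{1-2H₀} (∫₀^{min(T,1)} |∫₀^t e^{is(k²-ξ)} ds|² dt) dξ ≥ c k^{2-4H₀}`. -/
theorem divergence_integral_lower_bound (T H₀ : ℝ) (hT : 0 < T)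
    (hH₀ : H₀ ∈ Set.Ioo (1 / 2 : ℝ) 1) :
    ∃ c > 0, ∀ k : ℕ, 1 ≤ k →
      c * (k : ℝ) ^ (2 - 4 * H₀) ≤
        ∫ ξ in {ξ : ℝ | (k : ℝ) ^ 2 / 2 ≤ |ξ| ∧ |ξ| ≤ 3 * (k : ℝ) ^ 2 / 2},
          |ξ| ^ (1 - 2 * H₀) *
            ∫ t in (0 : ℝ)..(min T 1),
              ‖∫ s in (0 : ℝ)..t,
                  Complex.exp (Complex.I * (s : ℂ) * (((k : ℝ) ^ 2 - ξ : ℝ) : ℂ))‖ ^ 2 := by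
  obtain ⟨hH, -⟩ := hH₀
  have hT₁ : 0 < min T 1 := lt_min hT one_pos
  have hcos : 0 < Real.cos (1 / 2) :=
    Real.cos_pos_of_mem_Ioo ⟨by linarith [Real.pi_pos], by linarith [Real.pi_gt_three]⟩
  refine ⟨Real.cos (1 / 2) ^ 2 * (min T 1 ^ 3 / 3) / 2, by positivity, fun k hk => ?_⟩
  have hK : 1 ≤ (k : ℝ) ^ 2 := one_le_pow₀ (by exact_mod_cast hk)
  have hKpow : ((k : ℝ) ^ 2) ^ (1 - 2 * H₀) = (k : ℝ) ^ (2 - 4 * H₀) := by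
    rw [← Real.rpow_natCast, ← Real.rpow_mul (Nat.cast_nonneg k)]
    push_cast
    ring_nf
  have hbound : ∀ ξ ∈ Set.Icc ((k : ℝ) ^ 2 - 1 / 2) ((k : ℝ) ^ 2),
      (k : ℝ) ^ (2 - 4 * H₀) * (Real.cos (1 / 2) ^ 2 * (min T 1 ^ 3 / 3)) ≤
        |ξ| ^ (1 - 2 * H₀) * ∫ t in (0 : ℝ)..(min T 1),
          ‖∫ s in (0 : ℝ)..t, exp (I * s * (((k : ℝ) ^ 2 - ξ : ℝ) : ℂ))‖ ^ 2 := by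
    rintro ξ ⟨hξ₁, hξ₂⟩
    have hξ : 0 < ξ := by linarith
    refine mul_le_mul ?_ (cos_sq_mul_le_intervalIntegral_norm_sq_intervalIntegral_exp_I_mul
      hT₁.le (by linarith [Real.pi_gt_three]) ?_) (by positivity) (by positivity)
    · rw [← hKpow, abs_of_pos hξ]
      exact Real.rpow_le_rpow_of_nonpos hξ hξ₂ (by linarith)
    · rw [abs_of_nonneg (by linarith)]
      nlinarith [min_le_right T 1]
  calc _ = (k : ℝ) ^ (2 - 4 * H₀) * (Real.cos (1 / 2) ^ 2 * (min T 1 ^ 3 / 3)) *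
        volume.real (Set.Icc ((k : ℝ) ^ 2 - 1 / 2) ((k : ℝ) ^ 2)) := by
        rw [Real.volume_real_Icc_of_le (by linarith)]
        ring
    _ ≤ _ := mul_measureReal_le_setIntegral measurableSet_Icc measure_Icc_lt_top.ne
        (fun ξ ⟨hξ₁, hξ₂⟩ => by
          rw [Set.mem_ofPred_eq, abs_of_pos (by linarith)]
          constructor <;> linarith)
        (integrableOn_abs_rpow_mul_of_continuous
          ((continuous_intervalIntegral_norm_sq_intervalIntegral_exp_I_mul _).comp
            (continuous_const.sub continuous_id)) _ (by positivity))
        (ae_of_all _ fun ξ => mul_nonneg (Real.rpow_nonneg (abs_nonneg ξ) _)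
          (intervalIntegral.integral_nonneg hT₁.le fun _ _ => by positivity))
        hbound
end
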